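/- The map X : ℝ² → ℝ⁴ defined by X(u, v) := (u·sin v, −u·cos v, −v, −u²/2) is a conformal parametrization with induced metric ds² = (1 + u²)(du² + dv²) (i.e., ⟨X_u, X_v⟩ = 0 and |X_u|² = |X_v|² = 1 + u²), and its mean curvature vector H := (X_{uu} + X_{vv})/(1 + u²) equals the component of −e₄ = (0,0,0,−1) orthogonal to the tangent plane: H = −e₄ + (1/(1 + u²))[⟨X_u, e₄⟩·X_u + ⟨X_v, e₄⟩·X_v] at every point. Hence X parametrizes a translating soliton of the mean curvature flow in ℝ⁴ with translating velocity −e₄. -/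

import Mathlib

/-!
Along a coordinate line, a partial derivative of a map on `ℝ × ℝ` is an ordinary one-variable
derivative. This turns the Fréchet derivatives in the definitions into closed forms for `X_u`,
`X_v`, `X_uu` and `X_vv`, after which conformality and the translator equation are polynomial
identities modulo `sin² v + cos² v = 1`.
-/

open Real

/-- The Castro–Lerma Hamiltonian stationary Lagrangian translator
`X(u, v) = (u sin v, −u cos v, −v, −u²/2)` in `ℝ⁴`. -/
noncomputable def XCL (p : ℝ × ℝ) : Fin 4 → ℝ :=
  ![p.1 * Real.sin p.2, -(p.1 * Real.cos p.2), -p.2, -(p.1 ^ 2) / 2]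

/-- First partial derivative in `u` of the `k`-th component. -/
noncomputable def XCLu (p : ℝ × ℝ) (k : Fin 4) : ℝ :=
  fderiv ℝ (fun q => XCL q k) p (1, 0)

/-- First partial derivative in `v` of the `k`-th component. -/
noncomputable def XCLv (p : ℝ × ℝ) (k : Fin 4) : ℝ :=
  fderiv ℝ (fun q => XCL q k) p (0, 1)

/-- Second partial derivative in `u` of the `k`-th component. -/
noncomputable def XCLuu (p : ℝ × ℝ) (k : Fin 4) : ℝ :=
  fderiv ℝ (fun q => fderiv ℝ (fun r => XCL r k) q (1, 0)) p (1, 0)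

/-- Second partial derivative in `v` of the `k`-th component. -/
noncomputable def XCLvv (p : ℝ × ℝ) (k : Fin 4) : ℝ :=
  fderiv ℝ (fun q => fderiv ℝ (fun r => XCL r k) q (0, 1)) p (0, 1)

section PartialDeriv

variable {F : Type*} [NormedAddCommGroup F] [NormedSpace ℝ F] {f : ℝ × ℝ → F} {p : ℝ × ℝ}

theorem fderiv_apply_one_zero_eq_deriv (hf : DifferentiableAt ℝ f p) :
    fderiv ℝ f p (1, 0) = deriv (fun u => f (u, p.2)) p.1 :=
  (hf.hasFDerivAt.comp_hasDerivAt p.1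
    ((hasDerivAt_id p.1).prodMk (hasDerivAt_const p.1 p.2))).deriv.symm

theorem fderiv_apply_zero_one_eq_deriv (hf : DifferentiableAt ℝ f p) :
    fderiv ℝ f p (0, 1) = deriv (fun v => f (p.1, v)) p.2 :=
  (hf.hasFDerivAt.comp_hasDerivAt p.2
    ((hasDerivAt_const p.2 p.1).prodMk (hasDerivAt_id p.2))).deriv.symm

end PartialDeriv

theorem differentiable_XCL_apply (k : Fin 4) : Differentiable ℝ (fun q => XCL q k) := by
  fin_cases k <;> simp [XCL] <;> fun_prop

theorem XCLu_eq (p : ℝ × ℝ) : XCLu p = ![Real.sin p.2, -Real.cos p.2, 0, -p.1] := by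
  funext k
  rw [XCLu, fderiv_apply_one_zero_eq_deriv (differentiable_XCL_apply k p)]
  fin_cases k <;> simp [XCL]
  ring

theorem XCLv_eq (p : ℝ × ℝ) : XCLv p = ![p.1 * Real.cos p.2, p.1 * Real.sin p.2, -1, 0] := by
  funext k
  rw [XCLv, fderiv_apply_zero_one_eq_deriv (differentiable_XCL_apply k p)]
  fin_cases k <;> simp [XCL]

theorem XCLuu_eq (p : ℝ × ℝ) : XCLuu p = ![0, 0, 0, -1] := by
  funext k
  change fderiv ℝ (fun q => XCLu q k) p (1, 0) = _
  simp only [XCLu_eq]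
  rw [fderiv_apply_one_zero_eq_deriv (by fin_cases k <;> simp)]
  fin_cases k <;> simp

theorem XCLvv_eq (p : ℝ × ℝ) : XCLvv p = ![-(p.1 * Real.sin p.2), p.1 * Real.cos p.2, 0, 0] := by
  funext k
  change fderiv ℝ (fun q => XCLv q k) p (0, 1) = _
  simp only [XCLv_eq]
  rw [fderiv_apply_zero_one_eq_deriv (by fin_cases k <;> simp <;> fun_prop)]
  fin_cases k <;> simp

/-- **(Example: Hamiltonian stationary Lagrangian translator in `ℝ⁴`).** The map
`X(u, v) = (u sin v, −u cos v, −v, −u²/2)` is a conformal parametrization with induced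
metric `(1 + u²)(du² + dv²)`, and its mean curvature vector `H = (X_uu + X_vv)/(1 + u²)`
equals the projection of `−e₄ = (0,0,0,−1)` orthogonal to the tangent plane:
`H = −e₄ + (1/(1 + u²))[⟨X_u, e₄⟩·X_u + ⟨X_v, e₄⟩·X_v]`. -/
theorem castro_lerma_translator (p : ℝ × ℝ) :
    (∑ k : Fin 4, XCLu p k * XCLv p k = 0)
    ∧ (∑ k : Fin 4, (XCLu p k) ^ 2 = 1 + p.1 ^ 2)
    ∧ (∑ k : Fin 4, (XCLv p k) ^ 2 = 1 + p.1 ^ 2)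
    ∧ (∀ k : Fin 4,
        (XCLuu p k + XCLvv p k) / (1 + p.1 ^ 2)
          = (if k = 3 then (-1 : ℝ) else 0)
            + (1 / (1 + p.1 ^ 2)) * (XCLu p 3 * XCLu p k + XCLv p 3 * XCLv p k)) := by
  simp only [XCLu_eq, XCLv_eq, XCLuu_eq, XCLvv_eq, Fin.sum_univ_four]
  refine ⟨by simp; ring, by simp, ?_, fun k => ?_⟩
  · simp
    linear_combination p.1 ^ 2 * Real.sin_sq_add_cos_sq p.2
  · fin_cases k <;> simp
    · ring
    · ring
    · field_simp
      ring
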